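/- arXiv:2601.12633 — 3 statements merged into one kernel-verified Lean document; each statement's English description precedes it below -/
import Mathlib

section
/- Let $\varpi$ be a positive definite $d\times d$ real matrix. The matrix $r := -\frac{\varpi}{2} + \left(\varpi + \left(\frac{\varpi}{2}\right)^2\right)^{1/2}$ (where the square root is the principal symmetric square root) satisfies $(I+\varpi^{-1})^{-1} \preceq r \preceq I$ in the Loewner order. -/
open Matrix

open scoped ComplexOrder in
/-- The positive semidefinite square root of a positive semidefinite matrix
(the definition `Matrix.PosSemidef.sqrt` of the older Mathlib, removed since). -/
noncomputable def Matrix.PosSemidef.sqrt {n : Type*} [Fintype n] [DecidableEq n] {𝕜 : Type*}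
    [RCLike 𝕜] {A : Matrix n n 𝕜} (hA : A.PosSemidef) : Matrix n n 𝕜 :=
  hA.1.eigenvectorUnitary.1 * diagonal ((↑) ∘ (√·) ∘ hA.1.eigenvalues) *
  (star hA.1.eigenvectorUnitary : Matrix n n 𝕜)

open scoped MatrixOrder in
private lemma sqrt_eq_cfc_sqrt {n : Type*} [Fintype n] [DecidableEq n]
    {A : Matrix n n ℝ} (hA : A.PosSemidef) (B : Matrix n n ℝ) (hB : B.PosSemidef)
    (hBB : B * B = A) : hA.sqrt = B := by
  have h1 : hA.sqrt = cfc Real.sqrt A := by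
    rw [hA.1.cfc_eq, IsHermitian.cfc]
    rfl
  rw [h1, ← cfcₙ_eq_cfc (hf0 := Real.sqrt_zero), ← CFC.sqrt_eq_real_sqrt A hA.nonneg]
  exact CFC.sqrt_unique hBB hB.nonneg

private lemma scalar_upper {l : ℝ} (hl : 0 < l) :
    0 ≤ 1 - (-(l / 2) + Real.sqrt (l + (l / 2) ^ 2)) := by
  have h1 : Real.sqrt (l + (l / 2) ^ 2) ≤ 1 + l / 2 := by
    have := Real.sqrt_le_sqrt (show l + (l / 2) ^ 2 ≤ (1 + l / 2) ^ 2 by nlinarith)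
    rwa [Real.sqrt_sq (by positivity)] at this
  linarith

private lemma scalar_lower {l : ℝ} (hl : 0 < l) :
    0 ≤ -(l / 2) + Real.sqrt (l + (l / 2) ^ 2) - (1 + l⁻¹)⁻¹ := by
  have h2 : (0:ℝ) < 1 + l := by linarith
  have hc0 : 1 + l⁻¹ = (1 + l) / l := by field_simp; ring
  have hc : (1 + l⁻¹)⁻¹ = l / (1 + l) := by rw [hc0, inv_div]
  have h1 : l / 2 + l / (1 + l) ≤ Real.sqrt (l + (l / 2) ^ 2) := by
    rw [show l / 2 + l / (1 + l) = Real.sqrt ((l / 2 + l / (1 + l)) ^ 2) from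
      (Real.sqrt_sq (by positivity)).symm]
    apply Real.sqrt_le_sqrt
    have h3 : (0:ℝ) < (1 + l) ^ 2 := by positivity
    rw [div_add_div _ _ (by norm_num) h2.ne', div_pow]
    rw [div_le_iff₀ (by positivity)]
    nlinarith [sq_nonneg l, sq_nonneg (1 + l), mul_pos hl h2]
  rw [hc]; linarith

/-- The fixed point `r = -ϖ/2 + (ϖ + (ϖ/2)²)^{1/2}` of the Riccati map satisfies
`(I + ϖ⁻¹)⁻¹ ⪯ r ⪯ I` in the Loewner order. -/
theorem riccati_fixed_point_bounds {d : ℕ} (ϖ : Matrix (Fin d) (Fin d) ℝ)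
    (hϖ : ϖ.PosDef)
    (hs : (ϖ + ((1 / 2 : ℝ) • ϖ) ^ 2).PosSemidef) :
    (-((1 / 2 : ℝ) • ϖ) + hs.sqrt - (1 + ϖ⁻¹)⁻¹).PosSemidef ∧
      ((1 : Matrix (Fin d) (Fin d) ℝ) - (-((1 / 2 : ℝ) • ϖ) + hs.sqrt)).PosSemidef := by
  classical
  set U : Matrix (Fin d) (Fin d) ℝ := ↑(hϖ.1.eigenvectorUnitary) with hUdef
  set lam : Fin d → ℝ := hϖ.1.eigenvalues with hlamdef
  have hlam_pos : ∀ i, 0 < lam i := fun i => hϖ.eigenvalues_pos i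
  have hUU : U * Uᴴ = 1 := by
    simpa [Matrix.star_eq_conjTranspose] using
      (Matrix.mem_unitaryGroup_iff).mp (hϖ.1.eigenvectorUnitary).2
  have hUU' : Uᴴ * U = 1 := by
    simpa [Matrix.star_eq_conjTranspose] using
      (Matrix.mem_unitaryGroup_iff').mp (hϖ.1.eigenvectorUnitary).2
  set φ : (Fin d → ℝ) → Matrix (Fin d) (Fin d) ℝ :=
    fun g => U * diagonal g * Uᴴ with hφdef
  have hmul : ∀ g h : Fin d → ℝ, φ g * φ h = φ (fun i => g i * h i) := by
    intro g h
    show (U * diagonal g * Uᴴ) * (U * diagonal h * Uᴴ) = U * diagonal (fun i => g i * h i) * Uᴴ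
    rw [← diagonal_mul_diagonal]
    simp only [Matrix.mul_assoc]
    rw [← Matrix.mul_assoc Uᴴ U, hUU', Matrix.one_mul]
  have hadd : ∀ g h : Fin d → ℝ, φ g + φ h = φ (fun i => g i + h i) := by
    intro g h
    show (U * diagonal g * Uᴴ) + (U * diagonal h * Uᴴ) = U * diagonal (fun i => g i + h i) * Uᴴ
    rw [← diagonal_add, Matrix.mul_add, Matrix.add_mul]
  have hneg : ∀ g : Fin d → ℝ, -φ g = φ (fun i => -(g i)) := by
    intro g
    show -(U * diagonal g * Uᴴ) = U * diagonal (fun i => -(g i)) * Uᴴ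
    rw [← diagonal_neg, Matrix.mul_neg, Matrix.neg_mul]
  have hsmul : ∀ (c : ℝ) (g : Fin d → ℝ), c • φ g = φ (fun i => c * g i) := by
    intro c g
    show c • (U * diagonal g * Uᴴ) = U * diagonal (fun i => c * g i) * Uᴴ
    rw [show (fun i => c * g i) = c • g from rfl]
    simp [diagonal_smul, Matrix.smul_mul, Matrix.mul_smul]
  have hone : φ (fun _ => 1) = 1 := by
    show U * diagonal (fun _ => (1:ℝ)) * Uᴴ = 1
    rw [show diagonal (fun _ => (1:ℝ)) = (1 : Matrix (Fin d) (Fin d) ℝ) from diagonal_one,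
      Matrix.mul_one, hUU]
  have hPSD : ∀ g : Fin d → ℝ, (∀ i, 0 ≤ g i) → (φ g).PosSemidef := by
    intro g hg
    exact (posSemidef_diagonal_iff.mpr hg).mul_mul_conjTranspose_same U
  have hinv : ∀ g : Fin d → ℝ, (∀ i, g i ≠ 0) → (φ g)⁻¹ = φ (fun i => (g i)⁻¹) := by
    intro g hg
    apply Matrix.inv_eq_right_inv
    rw [hmul]
    rw [show (fun i => g i * (g i)⁻¹) = (fun _ => (1:ℝ)) from
      funext fun i => mul_inv_cancel₀ (hg i)]
    exact hone
  have hϖeq : ϖ = φ lam := by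
    have := hϖ.1.spectral_theorem
    show ϖ = U * diagonal lam * Uᴴ
    rw [hUdef, hlamdef]
    simpa [Matrix.star_eq_conjTranspose, Function.comp, conjTranspose_eq_transpose_of_trivial] using this
  set t : Fin d → ℝ := fun i => Real.sqrt (lam i + (lam i / 2) ^ 2) with htdef
  have ht_nonneg : ∀ i, 0 ≤ t i := fun i => Real.sqrt_nonneg _
  have htsq : ∀ i, t i * t i = lam i + (lam i / 2) ^ 2 := by
    intro i
    exact Real.mul_self_sqrt (by nlinarith [hlam_pos i, sq_nonneg (lam i / 2)])
  have hhalf : (1 / 2 : ℝ) • ϖ = φ (fun i => lam i / 2) := by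
    rw [hϖeq, hsmul]
    rw [show (fun i => (1:ℝ) / 2 * lam i) = (fun i => lam i / 2) from funext fun i => by ring]
  have hsqrt : hs.sqrt = φ t := by
    apply sqrt_eq_cfc_sqrt hs _ (hPSD t ht_nonneg)
    rw [hmul, hhalf, pow_two, hmul, hϖeq, hadd]
    rw [show (fun i => t i * t i) = (fun i => lam i + lam i / 2 * (lam i / 2)) from
      funext fun i => by rw [htsq i]; ring]
  have hinvϖ : ϖ⁻¹ = φ (fun i => (lam i)⁻¹) := by
    rw [hϖeq, hinv lam (fun i => (hlam_pos i).ne')]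
  have honeinv : (1 + ϖ⁻¹)⁻¹ = φ (fun i => (1 + (lam i)⁻¹)⁻¹) := by
    rw [hinvϖ, show (1 : Matrix (Fin d) (Fin d) ℝ) = φ (fun _ => 1) from hone.symm, hadd,
      hinv _ (fun i => by have := hlam_pos i; positivity)]
  have hr : -((1 / 2 : ℝ) • ϖ) + hs.sqrt = φ (fun i => -(lam i / 2) + t i) := by
    conv_lhs => rw [hsqrt]
    rw [hhalf, hneg, hadd]
  constructor
  · rw [sub_eq_add_neg, hr, honeinv, hneg, hadd]
    apply hPSD
    intro i
    have h := scalar_lower (hlam_pos i)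
    simp only [htdef]
    linarith
  · rw [sub_eq_add_neg, hr, hneg,
      show (1 : Matrix (Fin d) (Fin d) ℝ) = φ (fun _ => 1) from hone.symm, hadd]
    apply hPSD
    intro i
    have h := scalar_upper (hlam_pos i)
    simp only [htdef]
    linarith
end

section
/- Let $\varpi$ be a positive definite matrix and let $v_n := \mathrm{Ricc}_\varpi^n(0)$ denote the $n$-fold iterate of the Riccati map $\mathrm{Ricc}_\varpi(v)=(I+(\varpi+v)^{-1})^{-1}$ starting from $0$. Then for any $n \geq p \geq 1$ and any positive semidefinite $v$, we have $\mathrm{Ricc}_\varpi^p(0) \preceq \mathrm{Ricc}_\varpi^n(0) \preceq \mathrm{Ricc}_\varpi^n(v) \preceq \mathrm{Ricc}_\varpi^{n-1}(I) \preceq \mathrm{Ricc}_\varpi^{p-1}(I) \preceq I$. -/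
open Matrix

/-- The Riccati map `Ricc_ϖ(v) = (I + (ϖ + v)⁻¹)⁻¹`. -/
noncomputable def Ricc {d : ℕ} (ϖ : Matrix (Fin d) (Fin d) ℝ) :
    Matrix (Fin d) (Fin d) ℝ → Matrix (Fin d) (Fin d) ℝ :=
  fun v => (1 + (ϖ + v)⁻¹)⁻¹

section Aux

variable {d : ℕ}

private lemma det_ne_zero_of_posDef {A : Matrix (Fin d) (Fin d) ℝ} (hA : A.PosDef) :
    IsUnit A.det :=
  isUnit_iff_ne_zero.mpr hA.det_pos.ne'

private lemma posDef_of_psd_isUnit {A : Matrix (Fin d) (Fin d) ℝ} (hA : A.PosSemidef)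
    (h : IsUnit A.det) : A.PosDef := by
  refine ⟨hA.1, fun x hx => ?_⟩
  rcases (hA.2 x).lt_or_eq with hlt | heq
  · exact hlt
  · exfalso
    have h0 : A *ᵥ x = 0 := (hA.dotProduct_mulVec_zero_iff x).mp (by
      rw [heq]; simp [dotProduct, mulVec, Finsupp.sum_fintype, Finset.mul_sum, mul_assoc])
    have hinj : Function.Injective (A.mulVec) :=
      (Matrix.mulVec_injective_iff_isUnit).mpr ((Matrix.isUnit_iff_isUnit_det _).mpr h)
    exact hx (Finsupp.coe_eq_zero.mp (hinj (by simpa using h0)))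

open scoped MatrixOrder in
/-- If `A` is positive definite and `A - 1` is PSD, then `1 - A⁻¹` is PSD. -/
private lemma one_sub_inv_psd {A : Matrix (Fin d) (Fin d) ℝ} (hA : A.PosDef)
    (h : (A - 1).PosSemidef) : ((1 : Matrix (Fin d) (Fin d) ℝ) - A⁻¹).PosSemidef := by
  have hAinv : A⁻¹.PosDef := hA.inv
  set N := CFC.sqrt A⁻¹ with hNdef
  have hNpsd : N.PosSemidef := (CFC.sqrt_nonneg A⁻¹).posSemidef
  have hNN : N * N = A⁻¹ := CFC.sqrt_mul_sqrt_self A⁻¹ hAinv.posSemidef.nonneg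
  have hNdet : IsUnit N.det := by
    have hdet : N.det * N.det = A⁻¹.det := by rw [← det_mul, hNN]
    have h2 : A⁻¹.det ≠ 0 := hAinv.det_pos.ne'
    exact isUnit_iff_ne_zero.mpr (fun h0 => h2 (by rw [← hdet, h0, mul_zero]))
  have key := h.conjTranspose_mul_mul_same N
  rw [hNpsd.1] at key
  have hA_eq : A = (N * N)⁻¹ := by
    rw [hNN, nonsing_inv_nonsing_inv A (det_ne_zero_of_posDef hA)]
  have hNMN : N * A * N = 1 := by
    rw [hA_eq, Matrix.mul_inv_rev, ← Matrix.mul_assoc,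
      Matrix.mul_nonsing_inv _ hNdet, Matrix.one_mul, Matrix.nonsing_inv_mul _ hNdet]
  have hexp : N * (A - 1) * N = 1 - A⁻¹ := by
    rw [Matrix.mul_sub, Matrix.mul_one, Matrix.sub_mul, hNMN, hNN]
  rwa [hexp] at key

open scoped MatrixOrder in
/-- Inverse is antitone on positive definite matrices. -/
private lemma inv_antitone_psd {A B : Matrix (Fin d) (Fin d) ℝ} (hA : A.PosDef)
    (hB : B.PosDef) (h : (B - A).PosSemidef) : (A⁻¹ - B⁻¹).PosSemidef := by
  set S := CFC.sqrt A with hSdef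
  have hSpsd : S.PosSemidef := (CFC.sqrt_nonneg A).posSemidef
  have hSS : S * S = A := CFC.sqrt_mul_sqrt_self A hA.posSemidef.nonneg
  have hSdet : IsUnit S.det := by
    have hdet : S.det * S.det = A.det := by rw [← det_mul, hSS]
    exact isUnit_iff_ne_zero.mpr
      (fun h0 => hA.det_pos.ne' (by rw [← hdet, h0, mul_zero]))
  have hSinvH : (S⁻¹).IsHermitian := hSpsd.1.inv
  -- M := S⁻¹ * B * S⁻¹ is positive definite
  have hMpsd : (S⁻¹ * B * S⁻¹).PosSemidef := by
    have := hB.posSemidef.conjTranspose_mul_mul_same S⁻¹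
    rwa [hSinvH.eq] at this
  have hMdef : (S⁻¹ * B * S⁻¹).PosDef := posDef_of_psd_isUnit hMpsd (by
    rw [det_mul, det_mul]
    exact ((Matrix.isUnit_nonsing_inv_det _ hSdet).mul
      (det_ne_zero_of_posDef hB)).mul (Matrix.isUnit_nonsing_inv_det _ hSdet))
  have hSAS : S⁻¹ * A * S⁻¹ = 1 := by
    rw [← hSS, ← Matrix.mul_assoc, Matrix.nonsing_inv_mul _ hSdet, Matrix.one_mul,
      Matrix.mul_nonsing_inv _ hSdet]
  have hM1 : (S⁻¹ * B * S⁻¹ - 1).PosSemidef := by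
    have hconj := h.conjTranspose_mul_mul_same S⁻¹
    rw [hSinvH.eq] at hconj
    rwa [Matrix.mul_sub, Matrix.sub_mul, hSAS] at hconj
  have h2 := one_sub_inv_psd hMdef hM1
  have hMinv : (S⁻¹ * B * S⁻¹)⁻¹ = S * B⁻¹ * S := by
    rw [Matrix.mul_inv_rev, Matrix.mul_inv_rev,
      nonsing_inv_nonsing_inv _ hSdet, ← Matrix.mul_assoc]
  rw [hMinv] at h2
  have h3 := h2.conjTranspose_mul_mul_same S⁻¹
  rw [hSinvH.eq] at h3
  have hfinal : S⁻¹ * (1 - S * B⁻¹ * S) * S⁻¹ = A⁻¹ - B⁻¹ := by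
    rw [Matrix.mul_sub, Matrix.mul_one, Matrix.sub_mul]
    congr 1
    · rw [← hSS, Matrix.mul_inv_rev]
    · simp only [← Matrix.mul_assoc]
      rw [Matrix.nonsing_inv_mul _ hSdet, Matrix.one_mul, Matrix.mul_assoc,
        Matrix.mul_nonsing_inv _ hSdet, Matrix.mul_one]
  rwa [hfinal] at h3

private lemma ricc_posDef {ϖ : Matrix (Fin d) (Fin d) ℝ} (hϖ : ϖ.PosDef)
    {v : Matrix (Fin d) (Fin d) ℝ} (hv : v.PosSemidef) : (Ricc ϖ v).PosDef := by
  have h1 : (ϖ + v).PosDef := hϖ.add_posSemidef hv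
  exact (Matrix.PosDef.posSemidef_add Matrix.PosSemidef.one h1.inv).inv

private lemma ricc_mono {ϖ : Matrix (Fin d) (Fin d) ℝ} (hϖ : ϖ.PosDef)
    {u v : Matrix (Fin d) (Fin d) ℝ} (hu : u.PosSemidef) (hv : v.PosSemidef)
    (h : (v - u).PosSemidef) : (Ricc ϖ v - Ricc ϖ u).PosSemidef := by
  have h1 : (ϖ + u).PosDef := hϖ.add_posSemidef hu
  have h2 : (ϖ + v).PosDef := hϖ.add_posSemidef hv
  have h3 : ((ϖ + v) - (ϖ + u)).PosSemidef := by
    simpa [add_sub_add_left_eq_sub] using h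
  have h4 := inv_antitone_psd h1 h2 h3
  have h5 : (1 + (ϖ + u)⁻¹).PosDef := Matrix.PosDef.posSemidef_add Matrix.PosSemidef.one h1.inv
  have h6 : (1 + (ϖ + v)⁻¹).PosDef := Matrix.PosDef.posSemidef_add Matrix.PosSemidef.one h2.inv
  have h7 : ((1 + (ϖ + u)⁻¹) - (1 + (ϖ + v)⁻¹)).PosSemidef := by
    simpa [add_sub_add_left_eq_sub] using h4
  have h8 := inv_antitone_psd h6 h5 h7
  simpa [Ricc] using h8

private lemma one_sub_ricc {ϖ : Matrix (Fin d) (Fin d) ℝ} (hϖ : ϖ.PosDef)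
    {v : Matrix (Fin d) (Fin d) ℝ} (hv : v.PosSemidef) :
    ((1 : Matrix (Fin d) (Fin d) ℝ) - Ricc ϖ v).PosSemidef := by
  have h1 : (ϖ + v).PosDef := hϖ.add_posSemidef hv
  have h5 : (1 + (ϖ + v)⁻¹).PosDef := Matrix.PosDef.posSemidef_add Matrix.PosSemidef.one h1.inv
  have h6 : ((1 + (ϖ + v)⁻¹) - 1).PosSemidef := by
    simpa using h1.inv.posSemidef
  exact one_sub_inv_psd h5 h6

private lemma iter_psd {ϖ : Matrix (Fin d) (Fin d) ℝ} (hϖ : ϖ.PosDef)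
    {v : Matrix (Fin d) (Fin d) ℝ} (hv : v.PosSemidef) (n : ℕ) :
    ((Ricc ϖ)^[n] v).PosSemidef := by
  induction n with
  | zero => simpa using hv
  | succ k ih =>
    rw [Function.iterate_succ_apply']
    exact (ricc_posDef hϖ ih).posSemidef

private lemma iter_mono {ϖ : Matrix (Fin d) (Fin d) ℝ} (hϖ : ϖ.PosDef)
    {u v : Matrix (Fin d) (Fin d) ℝ} (hu : u.PosSemidef) (hv : v.PosSemidef)
    (h : (v - u).PosSemidef) (n : ℕ) :
    ((Ricc ϖ)^[n] v - (Ricc ϖ)^[n] u).PosSemidef := by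
  induction n with
  | zero => simpa using h
  | succ k ih =>
    rw [Function.iterate_succ_apply', Function.iterate_succ_apply']
    exact ricc_mono hϖ (iter_psd hϖ hu k) (iter_psd hϖ hv k) ih

private lemma iter_one_le_one {ϖ : Matrix (Fin d) (Fin d) ℝ} (hϖ : ϖ.PosDef) (n : ℕ) :
    ((1 : Matrix (Fin d) (Fin d) ℝ) - (Ricc ϖ)^[n] 1).PosSemidef := by
  cases n with
  | zero => simpa using Matrix.PosSemidef.zero
  | succ k =>
    rw [Function.iterate_succ_apply']
    exact one_sub_ricc hϖ (iter_psd hϖ Matrix.PosSemidef.one k)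

end Aux

/-- Sandwich estimates for the iterates of the Riccati map: for `n ≥ p ≥ 1` and any
positive semidefinite `v`,
`Ricc_ϖ^p(0) ⪯ Ricc_ϖ^n(0) ⪯ Ricc_ϖ^n(v) ⪯ Ricc_ϖ^{n-1}(I) ⪯ Ricc_ϖ^{p-1}(I) ⪯ I`. -/
theorem riccati_iterates_sandwich {d : ℕ} (ϖ : Matrix (Fin d) (Fin d) ℝ)
    (hϖ : ϖ.PosDef) (n p : ℕ) (hp : 1 ≤ p) (hpn : p ≤ n)
    (v : Matrix (Fin d) (Fin d) ℝ) (hv : v.PosSemidef) :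
    ((Ricc ϖ)^[n] 0 - (Ricc ϖ)^[p] 0).PosSemidef ∧
    ((Ricc ϖ)^[n] v - (Ricc ϖ)^[n] 0).PosSemidef ∧
    ((Ricc ϖ)^[n - 1] 1 - (Ricc ϖ)^[n] v).PosSemidef ∧
    ((Ricc ϖ)^[p - 1] 1 - (Ricc ϖ)^[n - 1] 1).PosSemidef ∧
    ((1 : Matrix (Fin d) (Fin d) ℝ) - (Ricc ϖ)^[p - 1] 1).PosSemidef := by
  have hn : 1 ≤ n := hp.trans hpn
  refine ⟨?_, ?_, ?_, ?_, ?_⟩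
  · -- Ricc^[n] 0 ⪰ Ricc^[p] 0
    have hsplit : (Ricc ϖ)^[n] (0 : Matrix (Fin d) (Fin d) ℝ)
        = (Ricc ϖ)^[p] ((Ricc ϖ)^[n - p] 0) := by
      rw [← Function.iterate_add_apply]
      congr 1
      omega
    rw [hsplit]
    exact iter_mono hϖ Matrix.PosSemidef.zero (iter_psd hϖ Matrix.PosSemidef.zero _)
      (by simpa using iter_psd hϖ Matrix.PosSemidef.zero (n - p)) p
  · -- Ricc^[n] v ⪰ Ricc^[n] 0
    exact iter_mono hϖ Matrix.PosSemidef.zero hv (by simpa using hv) n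
  · -- Ricc^[n-1] 1 ⪰ Ricc^[n] v
    have hsplit : (Ricc ϖ)^[n] v = (Ricc ϖ)^[n - 1] (Ricc ϖ v) := by
      conv_lhs => rw [show n = (n - 1) + 1 by omega]
      rw [Function.iterate_succ_apply]
    rw [hsplit]
    exact iter_mono hϖ (ricc_posDef hϖ hv).posSemidef Matrix.PosSemidef.one
      (one_sub_ricc hϖ hv) (n - 1)
  · -- Ricc^[p-1] 1 ⪰ Ricc^[n-1] 1
    have hsplit : (Ricc ϖ)^[n - 1] (1 : Matrix (Fin d) (Fin d) ℝ)
        = (Ricc ϖ)^[p - 1] ((Ricc ϖ)^[n - p] 1) := by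
      rw [← Function.iterate_add_apply]
      congr 1
      omega
    rw [hsplit]
    exact iter_mono hϖ (iter_psd hϖ Matrix.PosSemidef.one _) Matrix.PosSemidef.one
      (iter_one_le_one hϖ (n - p)) (p - 1)
  · exact iter_one_le_one hϖ (p - 1)
end

section
/- Let $\mu$ be a probability measure on $\mathbb{X}$ and $K$ a Markov kernel from $\mathbb{X}$ to $\mathbb{Y}$ such that $\delta_x K \ll \mu K$ for all $x$. Define the dual kernel $K^*_\mu(y,dx) := \mu(dx)\frac{d\delta_x K}{d\mu K}(y)$. Then the measure $\mu(dx)K(x,dy)K^*_\mu(y,d\bar{x})$ on $\mathbb{X}\times\mathbb{Y}\times\mathbb{X}$ is symmetric under swapping $x$ and $\bar{x}$, and consequently $\mu K K^*_\mu = \mu$. -/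
open MeasureTheory ProbabilityTheory ENNReal

/-- Reversibility of the dual (Bayes) kernel: if `ρ(x, y) = d(δₓK)/d(μK)(y)` and
`K*_μ(y, dx) = μ(dx) ρ(x, y)`, then the measure `μ(dx) K(x, dy) K*_μ(y, dx̄)` is symmetric
under swapping `x` and `x̄`, and consequently `μ K K*_μ = μ`. -/
theorem dual_kernel_reversibility {X Y : Type*} [MeasurableSpace X] [MeasurableSpace Y]
    (μ : Measure X) [IsProbabilityMeasure μ]
    (K : Kernel X Y) [IsMarkovKernel K]
    (ρ : X → Y → ℝ≥0∞) (hρ : Measurable (Function.uncurry ρ))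
    (hdens : ∀ x, (K x : Measure Y) = (μ.bind K).withDensity (ρ x))
    (Kstar : Y → Measure X)
    (hKstar : ∀ y, Kstar y = μ.withDensity (fun x => ρ x y)) :
    (∀ (A C : Set X) (B : Set Y), MeasurableSet A → MeasurableSet B → MeasurableSet C →
      ∫⁻ x in A, ∫⁻ y in B, Kstar y C ∂(K x) ∂μ =
        ∫⁻ x in C, ∫⁻ y in B, Kstar y A ∂(K x) ∂μ) ∧
    (μ.bind K).bind Kstar = μ := by
  set ν := μ.bind K with hν
  have hρswap : Measurable (fun p : Y × X => ρ p.2 p.1) :=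
    hρ.comp measurable_swap
  have hν1 : IsProbabilityMeasure ν := by
    constructor
    rw [hν, Measure.bind_apply MeasurableSet.univ (Kernel.measurable K).aemeasurable]
    simp
  -- ∫ ρ x y dν y = 1
  have hρone : ∀ x, ∫⁻ y, ρ x y ∂ν = 1 := by
    intro x
    have : (K x) Set.univ = (ν.withDensity (ρ x)) Set.univ := by rw [hdens x]
    rw [withDensity_apply _ MeasurableSet.univ, setLIntegral_univ] at this
    simpa using this.symm
  -- key computation
  have key : ∀ (A C : Set X) (B : Set Y), MeasurableSet A → MeasurableSet B → MeasurableSet C →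
      ∫⁻ x in A, ∫⁻ y in B, Kstar y C ∂(K x) ∂μ =
        ∫⁻ y in B, (∫⁻ x in A, ρ x y ∂μ) * (∫⁻ z in C, ρ z y ∂μ) ∂ν := by
    intro A C B hA hB hC
    have hg : Measurable (fun y => ∫⁻ z in C, ρ z y ∂μ) :=
      Measurable.lintegral_prod_right' (ν := μ.restrict C) hρswap
    calc ∫⁻ x in A, ∫⁻ y in B, Kstar y C ∂(K x) ∂μ
        = ∫⁻ x in A, ∫⁻ y in B, ρ x y * ∫⁻ z in C, ρ z y ∂μ ∂ν ∂μ := by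
          refine setLIntegral_congr_fun hA (fun x _ => ?_)
          simp_rw [hKstar, withDensity_apply _ hC]
          rw [hdens x, restrict_withDensity hB,
            lintegral_withDensity_eq_lintegral_mul _ (hρ.of_uncurry_left) hg]
          rfl
      _ = ∫⁻ y in B, ∫⁻ x in A, ρ x y * ∫⁻ z in C, ρ z y ∂μ ∂μ ∂ν := by
          rw [lintegral_lintegral_swap]
          exact (hρ.mul (hg.comp measurable_snd)).aemeasurable
      _ = ∫⁻ y in B, (∫⁻ x in A, ρ x y ∂μ) * (∫⁻ z in C, ρ z y ∂μ) ∂ν := by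
          refine setLIntegral_congr_fun hB (fun y _ => ?_)
          rw [lintegral_mul_const _ (hρ.of_uncurry_right)]
  constructor
  · intro A C B hA hB hC
    rw [key A C B hA hB hC, key C A B hC hB hA]
    exact setLIntegral_congr_fun hB (fun y _ => mul_comm _ _)
  · have hKstarMeas : Measurable Kstar := by
      apply Measure.measurable_of_measurable_coe
      intro s hs
      simp_rw [hKstar, withDensity_apply _ hs]
      exact Measurable.lintegral_prod_right' (ν := μ.restrict s) hρswap
    ext s hs
    rw [Measure.bind_apply hs hKstarMeas.aemeasurable]
    calc ∫⁻ y, Kstar y s ∂ν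
        = ∫⁻ y, ∫⁻ x in s, ρ x y ∂μ ∂ν := by
          refine lintegral_congr fun y => ?_
          rw [hKstar y, withDensity_apply _ hs]
      _ = ∫⁻ x in s, ∫⁻ y, ρ x y ∂ν ∂μ := by
          rw [lintegral_lintegral_swap hρswap.aemeasurable]
      _ = μ s := by
          rw [setLIntegral_congr_fun hs (fun x _ => hρone x)]
          simp
end
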